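/- arXiv:math/0001184 — 4 statements merged into one kernel-verified Lean document; each statement's English description precedes it below -/
import Mathlib

section
/- Let g be a simple complex Lie algebra, α, β ∈ Δ roots with α ≠ ±β, and let S = S(α,β) = {j ∈ ℤ : β + jα ∈ Δ} be the α-string through β. Then in the universal enveloping algebra U(g), Σ_{j∈S} [e_α, e_{β+jα} e_{-β-jα}] = 0. -/
attribute [local instance 100] LieRing.ofAssociativeRing

/-!
Writing `γ_j = β + jα`, the derivation `ad e_α` splits the `j`-th term into
`[e_α, e_{γ_j}] e_{-γ_j} + e_{γ_j} [e_α, e_{-γ_j}]`. The first summand is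
`N(α, γ_j) e_{γ_{j+1}} e_{-γ_j}`, and invariance of the form gives
`N(α, -γ_{j+1}) = -N(α, γ_j)`, which makes the second summand the negative of the first summand
of the `(j-1)`-st term, so the sum telescopes. Just beyond the ends of the string the brackets
vanish: as the string is an interval symmetric about any `k` with `β + kα = 0`, such a `k` cannot
lie there, so `[e_α, e_{-α}]` never enters.
-/

theorem lie_mul_eq_lie_mul_add_mul_lie {A : Type*} [Ring A] (x a b : A) :
    ⁅x, a * b⁆ = ⁅x, a⁆ * b + a * ⁅x, b⁆ := by
  simp only [Ring.lie_def]
  noncomm_ring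

theorem sum_sub_pred_eq_zero {M : Type*} [AddCommGroup M] (S : Finset ℤ) (G : ℤ → M)
    (hG : ∀ j, G j ≠ 0 → j ∈ S ∧ j + 1 ∈ S) :
    ∑ j ∈ S, (G j - G (j - 1)) = 0 := by
  have hG₀ : ∑ᶠ j, G j = ∑ j ∈ S, G j :=
    finsum_eq_sum_of_support_subset G fun j hj => (hG j hj).1
  have hG₁ : ∑ᶠ j, G (j - 1) = ∑ j ∈ S, G (j - 1) :=
    finsum_eq_sum_of_support_subset _ fun j hj => by simpa using (hG _ hj).2
  rw [Finset.sum_sub_distrib, ← hG₀, ← hG₁]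
  exact sub_eq_zero.2 (finsum_comp_equiv (Equiv.subRight 1)).symm

section RootString

variable {K : Type*} [CommRing K] {L : Type*} [LieRing L] [LieAlgebra K L] {R : Type*}
  [AddCommGroup R] {Δ : Finset R} {e : R → L} {B : L →ₗ[K] L →ₗ[K] K} {N : R → R → K}
  {α β : R} {S : Finset ℤ}

theorem mem_rootString_of_add_zsmul_eq_zero (hnegmem : ∀ γ ∈ Δ, -γ ∈ Δ)
    (hS : ∀ j : ℤ, j ∈ S ↔ β + j • α ∈ Δ) (hstring : ∃ p q : ℤ, (S : Set ℤ) = Set.Icc p q)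
    {j k : ℤ} (hj : j ∈ S) (hk : β + k • α = 0) : k ∈ S := by
  obtain ⟨p, q, hpq⟩ := hstring
  have hIcc : ∀ i, i ∈ S ↔ p ≤ i ∧ i ≤ q := fun i => by
    rw [← Finset.mem_coe, hpq, Set.mem_Icc]
  have hreflect : 2 * k - j ∈ S := by
    rw [hS]
    convert hnegmem _ ((hS j).1 hj) using 1
    rw [eq_neg_of_add_eq_zero_left hk]
    module
  rw [hIcc] at hj hreflect ⊢
  omega

theorem structConst_neg_add_eq_neg (hBinv : ∀ x y z : L, B ⁅x, y⁆ z = B x ⁅y, z⁆)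
    (hnegmem : ∀ γ ∈ Δ, -γ ∈ Δ) (hnorm : ∀ γ ∈ Δ, B (e γ) (e (-γ)) = 1)
    (hbr : ∀ γ ∈ Δ, ∀ δ ∈ Δ, γ + δ ∈ Δ → ⁅e γ, e δ⁆ = N γ δ • e (γ + δ))
    {α γ : R} (hα : α ∈ Δ) (hγ : γ ∈ Δ) (hαγ : α + γ ∈ Δ) :
    N α (-(α + γ)) = -N α γ := by
  have hsum : α + -(α + γ) = -γ := by abel
  have hnorm' : B (e (-γ)) (e γ) = 1 := by simpa using hnorm _ (hnegmem γ hγ)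
  -- both structure constants are read off the invariant number `B (e α) ⁅e γ, e (-(α + γ))⁆`
  have hN : N α γ = B (e α) ⁅e γ, e (-(α + γ))⁆ := by
    rw [← hBinv, hbr α hα γ hγ hαγ, LinearMap.map_smul₂, hnorm _ hαγ, smul_eq_mul, mul_one]
  have hN' : N α (-(α + γ)) = -B (e α) ⁅e γ, e (-(α + γ))⁆ := by
    rw [← lie_skew, map_neg, ← hBinv, hbr α hα _ (hnegmem _ hαγ) (hsum ▸ hnegmem γ hγ), hsum]
    simp [hnorm']
  rw [hN', hN]

theorem lie_e_string_eq_ite (hnegmem : ∀ γ ∈ Δ, -γ ∈ Δ)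
    (hbr : ∀ γ ∈ Δ, ∀ δ ∈ Δ, γ + δ ∈ Δ → ⁅e γ, e δ⁆ = N γ δ • e (γ + δ))
    (hvanish : ∀ γ ∈ Δ, ∀ δ ∈ Δ, γ + δ ≠ 0 → γ + δ ∉ Δ → ⁅e γ, e δ⁆ = 0)
    (hα : α ∈ Δ) (hS : ∀ j : ℤ, j ∈ S ↔ β + j • α ∈ Δ)
    (hstring : ∃ p q : ℤ, (S : Set ℤ) = Set.Icc p q) {j : ℤ} (hj : j ∈ S) :
    ⁅e α, e (β + j • α)⁆ = if j + 1 ∈ S then N α (β + j • α) • e (β + (j + 1) • α) else 0 := by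
  have hsucc : α + (β + j • α) = β + (j + 1) • α := by module
  split_ifs with hj₁
  · rw [hbr α hα _ ((hS j).1 hj) (hsucc ▸ (hS _).1 hj₁), hsucc]
  · refine hvanish α hα _ ((hS j).1 hj) (hsucc ▸ fun h => hj₁ ?_) (hsucc ▸ (hj₁ <| (hS _).2 ·))
    exact mem_rootString_of_add_zsmul_eq_zero hnegmem hS hstring hj h

theorem lie_e_neg_string_eq_ite (hBinv : ∀ x y z : L, B ⁅x, y⁆ z = B x ⁅y, z⁆)
    (hnegmem : ∀ γ ∈ Δ, -γ ∈ Δ) (hnorm : ∀ γ ∈ Δ, B (e γ) (e (-γ)) = 1)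
    (hbr : ∀ γ ∈ Δ, ∀ δ ∈ Δ, γ + δ ∈ Δ → ⁅e γ, e δ⁆ = N γ δ • e (γ + δ))
    (hvanish : ∀ γ ∈ Δ, ∀ δ ∈ Δ, γ + δ ≠ 0 → γ + δ ∉ Δ → ⁅e γ, e δ⁆ = 0)
    (hα : α ∈ Δ) (hS : ∀ j : ℤ, j ∈ S ↔ β + j • α ∈ Δ)
    (hstring : ∃ p q : ℤ, (S : Set ℤ) = Set.Icc p q) {j : ℤ} (hj : j ∈ S) :
    ⁅e α, e (-(β + j • α))⁆ =
      if j - 1 ∈ S then -N α (β + (j - 1) • α) • e (-(β + (j - 1) • α)) else 0 := by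
  have hpred : α + -(β + j • α) = -(β + (j - 1) • α) := by module
  have hneg : -(β + j • α) ∈ Δ := hnegmem _ ((hS j).1 hj)
  split_ifs with hj₁
  · have hγ := (hS _).1 hj₁
    have hαγ : α + (β + (j - 1) • α) = β + j • α := by module
    rw [hbr α hα _ hneg (hpred ▸ hnegmem _ hγ), hpred, ← hαγ,
      structConst_neg_add_eq_neg hBinv hnegmem hnorm hbr hα hγ (hαγ ▸ (hS j).1 hj)]
  · refine hvanish α hα _ hneg (hpred ▸ fun h => hj₁ ?_) (hpred ▸ fun h => hj₁ ?_)
    · exact mem_rootString_of_add_zsmul_eq_zero hnegmem hS hstring hj (neg_eq_zero.1 h)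
    · exact (hS _).2 (by simpa using hnegmem _ h)

end RootString

theorem root_string_sum_bracket_eplus_general
    {R : Type*} [AddCommGroup R] {L : Type*} [LieRing L] [LieAlgebra ℂ L]
    (Δ : Finset R) (e : R → L) (B : L →ₗ[ℂ] L →ₗ[ℂ] ℂ)
    (hBinv : ∀ x y z : L, B ⁅x, y⁆ z = B x ⁅y, z⁆)
    (hnegmem : ∀ γ ∈ Δ, -γ ∈ Δ)
    (hnorm : ∀ γ ∈ Δ, B (e γ) (e (-γ)) = 1)
    (N : R → R → ℂ)
    (hbr : ∀ γ ∈ Δ, ∀ δ ∈ Δ, γ + δ ∈ Δ → ⁅e γ, e δ⁆ = N γ δ • e (γ + δ))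
    (hvanish : ∀ γ ∈ Δ, ∀ δ ∈ Δ, γ + δ ≠ 0 → γ + δ ∉ Δ → ⁅e γ, e δ⁆ = 0)
    {α β : R} (hα : α ∈ Δ)
    (S : Finset ℤ) (hS : ∀ j : ℤ, j ∈ S ↔ β + j • α ∈ Δ)
    (hstring : ∃ p q : ℤ, (S : Set ℤ) = Set.Icc p q) :
    ∑ j ∈ S,
      ⁅(UniversalEnvelopingAlgebra.ι ℂ : L →ₗ⁅ℂ⁆ _) (e α),
        (UniversalEnvelopingAlgebra.ι ℂ : L →ₗ⁅ℂ⁆ _) (e (β + j • α)) *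
          (UniversalEnvelopingAlgebra.ι ℂ : L →ₗ⁅ℂ⁆ _) (e (-(β + j • α)))⁆
      = (0 : UniversalEnvelopingAlgebra ℂ L) := by
  set ι := (UniversalEnvelopingAlgebra.ι ℂ : L →ₗ⁅ℂ⁆ UniversalEnvelopingAlgebra ℂ L)
  let G : ℤ → UniversalEnvelopingAlgebra ℂ L := fun j =>
    if j ∈ S ∧ j + 1 ∈ S then
      N α (β + j • α) • (ι (e (β + (j + 1) • α)) * ι (e (-(β + j • α)))) else 0
  have hterm : ∀ j ∈ S,
      ⁅ι (e α), ι (e (β + j • α)) * ι (e (-(β + j • α)))⁆ = G j - G (j - 1) := by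
    intro j hj
    rw [lie_mul_eq_lie_mul_add_mul_lie, ← LieHom.map_lie, ← LieHom.map_lie,
      lie_e_string_eq_ite hnegmem hbr hvanish hα hS hstring hj,
      lie_e_neg_string_eq_ite hBinv hnegmem hnorm hbr hvanish hα hS hstring hj]
    simp only [G, hj, true_and, and_true, sub_add_cancel, apply_ite ι, ite_mul, mul_ite,
      map_smul, map_neg, map_zero, zero_mul, mul_zero, smul_mul_assoc, mul_smul_comm, neg_smul,
      mul_neg]
    split_ifs <;> abel
  rw [Finset.sum_congr rfl hterm]
  exact sum_sub_pred_eq_zero S G fun j hj => by_contra fun h => hj (if_neg h)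

theorem root_string_sum_bracket_eplus
    {R : Type*} [AddCommGroup R] {L : Type*} [LieRing L] [LieAlgebra ℂ L]
    (Δ : Finset R) (e : R → L) (B : L →ₗ[ℂ] L →ₗ[ℂ] ℂ)
    (hBsymm : ∀ x y : L, B x y = B y x)
    (hBinv : ∀ x y z : L, B ⁅x, y⁆ z = B x ⁅y, z⁆)
    (hnegmem : ∀ γ ∈ Δ, -γ ∈ Δ)
    (hnorm : ∀ γ ∈ Δ, B (e γ) (e (-γ)) = 1)
    (N : R → R → ℂ)
    (hbr : ∀ γ ∈ Δ, ∀ δ ∈ Δ, γ + δ ∈ Δ → ⁅e γ, e δ⁆ = N γ δ • e (γ + δ))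
    (hvanish : ∀ γ ∈ Δ, ∀ δ ∈ Δ, γ + δ ≠ 0 → γ + δ ∉ Δ → ⁅e γ, e δ⁆ = 0)
    {α β : R} (hα : α ∈ Δ) (hβ : β ∈ Δ) (h1 : β ≠ α) (h2 : β ≠ -α)
    (S : Finset ℤ) (hS : ∀ j : ℤ, j ∈ S ↔ β + j • α ∈ Δ)
    (hstring : ∃ p q : ℤ, (S : Set ℤ) = Set.Icc p q) :
    ∑ j ∈ S,
      ⁅(UniversalEnvelopingAlgebra.ι ℂ : L →ₗ⁅ℂ⁆ _) (e α),
        (UniversalEnvelopingAlgebra.ι ℂ : L →ₗ⁅ℂ⁆ _) (e (β + j • α)) *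
          (UniversalEnvelopingAlgebra.ι ℂ : L →ₗ⁅ℂ⁆ _) (e (-(β + j • α)))⁆
      = (0 : UniversalEnvelopingAlgebra ℂ L) :=
  root_string_sum_bracket_eplus_general Δ e B hBinv hnegmem hnorm N hbr hvanish hα S hS hstring
end

section
/- Let g be a simple complex Lie algebra with Cartan subalgebra h. For λ, μ ∈ h with μ regular (⟨α,μ⟩ ≠ 0 for all roots α), define T(λ,μ) = Σ_{α∈Δ} (⟨α,λ⟩/⟨α,μ⟩) e_{-α} e_α ∈ U(g). Then for all λ, ν ∈ h, T(λ,μ) and T(ν,μ) commute: T(λ,μ)T(ν,μ) = T(ν,μ)T(λ,μ). -/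
attribute [local instance 100] LieRing.ofAssociativeRing

/-!
Put `A α = e_{-α} e_α`, `c α = ⟨α,λ⟩/⟨α,μ⟩`, `d α = ⟨α,ν⟩/⟨α,μ⟩` and `w α β = c α d β - c β d α`, so
that `2 [T(λ,μ), T(ν,μ)] = ∑ w α β [A α, A β]`. The weight `w` is even in each variable and vanishes
at `β = ±α`. Expanding `[A α, A β]` by the Leibniz rule and reindexing with `α ↦ -α`, `β ↦ -β`,
only root triangles `a + b + c = 0` survive, each contributing `w a b N_{-a,-b} {e_a, {e_b, e_c}}`.

Invariance of the form makes `N_{a,b}` invariant under rotating a triangle, and on a triangle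
`w a b + w b c + w c a = 0` (a determinant with linearly dependent columns). Averaging over the
three rotations, `{a, {b, c}} - {b, {c, a}} = [[a, b], c]` turns the cubic terms into the
quadratic ones `[e_{-a}, e_a]`, whose sum changes sign under `(a, b, c) ↦ (-a, -b, -c)`.
-/

open Finset

theorem eq_zero_of_self_eq_neg (K : Type*) {M : Type*} [Field K] [CharZero K] [AddCommGroup M]
    [Module K M] {v : M} (h : v = -v) : v = 0 := by
  have h2 : (2 : K) • v = 0 := by rw [two_smul]; nth_rewrite 2 [h]; exact add_neg_cancel v
  exact (smul_eq_zero.mp h2).resolve_left two_ne_zero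

theorem sum_comp_neg_of_neg_mem {ι M : Type*} [InvolutiveNeg ι] [AddCommMonoid M] {s : Finset ι}
    (hs : ∀ a ∈ s, -a ∈ s) (f : ι → M) :
    ∑ a ∈ s, f (-a) = ∑ a ∈ s, f a :=
  sum_equiv (Equiv.neg _) (fun a => ⟨hs a, fun h => neg_neg a ▸ hs _ h⟩) fun _ _ => rfl

theorem two_smul_lie_sum_smul {K L ι : Type*} [CommRing K] [LieRing L] [LieAlgebra K L]
    (s : Finset ι) (X : ι → L) (c d : ι → K) :
    (2 : K) • ⁅∑ i ∈ s, c i • X i, ∑ j ∈ s, d j • X j⁆ =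
      ∑ i ∈ s, ∑ j ∈ s, (c i * d j - c j * d i) • ⁅X i, X j⁆ := by
  have hexpand : ⁅∑ i ∈ s, c i • X i, ∑ j ∈ s, d j • X j⁆ =
      ∑ i ∈ s, ∑ j ∈ s, (c i * d j) • ⁅X i, X j⁆ := by
    simp only [sum_lie_sum, smul_lie, lie_smul, smul_smul, mul_comm (d _)]
  have hswap : ∑ i ∈ s, ∑ j ∈ s, (c j * d i) • ⁅X i, X j⁆ =
      -∑ i ∈ s, ∑ j ∈ s, (c i * d j) • ⁅X i, X j⁆ := by
    rw [sum_comm, ← sum_neg_distrib]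
    refine sum_congr rfl fun i _ => ?_
    rw [← sum_neg_distrib]
    refine sum_congr rfl fun j _ => ?_
    rw [← lie_skew, smul_neg]
  simp only [hexpand, sub_smul, sum_sub_distrib, hswap, sub_neg_eq_add, two_smul]

section Anticommutator

variable {A : Type*} [Ring A]

def anticomm (x y : A) : A := x * y + y * x

theorem anticomm_anticomm_sub_anticomm_anticomm (a b c : A) :
    anticomm a (anticomm b c) - anticomm b (anticomm c a) = ⁅⁅a, b⁆, c⁆ := by
  simp only [anticomm, Ring.lie_def]; noncomm_ring

theorem smul_anticomm_anticomm_cyclic {K : Type*} [CommRing K] [Algebra K A] {x y z : K}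
    (hxyz : x + y + z = 0) (a b c : A) :
    x • anticomm a (anticomm b c) + y • anticomm b (anticomm c a) + z • anticomm c (anticomm a b) =
      y • ⁅⁅b, c⁆, a⁆ - x • ⁅⁅c, a⁆, b⁆ := by
  rw [eq_neg_of_add_eq_zero_right hxyz, ← anticomm_anticomm_sub_anticomm_anticomm b c a,
    ← anticomm_anticomm_sub_anticomm_anticomm c a b]
  module

theorem lie_mul_mul (x y z w : A) :
    ⁅x * y, z * w⁆ = x * ⁅y, z⁆ * w + x * z * ⁅y, w⁆ + ⁅x, z⁆ * w * y + z * ⁅x, w⁆ * y := by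
  simp only [Ring.lie_def]; noncomm_ring

end Anticommutator

section RootTriangles

variable {D : Type*} [AddCommGroup D] [DecidableEq D]

def rootTriangles (Δ : Finset D) : Finset (D × D × D) :=
  (Δ ×ˢ Δ ×ˢ Δ).filter fun t => t.1 + t.2.1 + t.2.2 = 0

theorem mem_rootTriangles {Δ : Finset D} {a b c : D} :
    (a, b, c) ∈ rootTriangles Δ ↔ a ∈ Δ ∧ b ∈ Δ ∧ c ∈ Δ ∧ a + b + c = 0 := by
  simp only [rootTriangles, mem_filter, mem_product, and_assoc]

def rotateTriple (D : Type*) : D × D × D ≃ D × D × D where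
  toFun t := (t.2.1, t.2.2, t.1)
  invFun t := (t.2.2, t.1, t.2.1)
  left_inv _ := rfl
  right_inv _ := rfl

theorem rotateTriple_mem_rootTriangles {Δ : Finset D} {t : D × D × D} :
    rotateTriple D t ∈ rootTriangles Δ ↔ t ∈ rootTriangles Δ := by
  obtain ⟨a, b, c⟩ := t
  simp only [rotateTriple, Equiv.coe_fn_mk, mem_rootTriangles]
  constructor
  · rintro ⟨hb, hc, ha, h⟩; exact ⟨ha, hb, hc, by rw [← h]; abel⟩
  · rintro ⟨ha, hb, hc, h⟩; exact ⟨hb, hc, ha, by rw [← h]; abel⟩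

theorem neg_mem_rootTriangles {Δ : Finset D} (hΔ : ∀ a ∈ Δ, -a ∈ Δ) {t : D × D × D}
    (ht : t ∈ rootTriangles Δ) : -t ∈ rootTriangles Δ := by
  obtain ⟨a, b, c⟩ := t
  obtain ⟨ha, hb, hc, h⟩ := mem_rootTriangles.mp ht
  exact mem_rootTriangles.mpr ⟨hΔ a ha, hΔ b hb, hΔ c hc, by rw [← neg_add, ← neg_add, h, neg_zero]⟩

theorem lie_eq_smul_of_mem_rootTriangles {R L : Type*} [LieRing L] [SMul R L] {Δ : Finset D}
    (hΔ : ∀ a ∈ Δ, -a ∈ Δ) {E : D → L} {N : D → D → R}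
    (hbr : ∀ α ∈ Δ, ∀ β ∈ Δ, α + β ∈ Δ → ⁅E α, E β⁆ = N α β • E (α + β))
    {a b c : D} (ht : (a, b, c) ∈ rootTriangles Δ) : ⁅E a, E b⁆ = N a b • E (-c) := by
  obtain ⟨ha, hb, hc, h⟩ := mem_rootTriangles.mp ht
  have hab : a + b = -c := eq_neg_of_add_eq_zero_left h
  rw [hbr a ha b hb (hab ▸ hΔ c hc), hab]

variable {M : Type*} [AddCommMonoid M]

theorem sum_rootTriangles_rotateTriple (Δ : Finset D) (f : D × D × D → M) :
    ∑ t ∈ rootTriangles Δ, f (rotateTriple D t) = ∑ t ∈ rootTriangles Δ, f t :=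
  sum_equiv (rotateTriple D) (fun _ => rotateTriple_mem_rootTriangles.symm) fun _ _ => rfl

theorem sum_rootTriangles_neg {Δ : Finset D} (hΔ : ∀ a ∈ Δ, -a ∈ Δ) (f : D × D × D → M) :
    ∑ t ∈ rootTriangles Δ, f (-t) = ∑ t ∈ rootTriangles Δ, f t :=
  sum_equiv (Equiv.neg _)
    (fun t => ⟨neg_mem_rootTriangles hΔ, fun h => neg_neg t ▸ neg_mem_rootTriangles hΔ h⟩)
    fun _ _ => rfl

end RootTriangles

section RootVectors

variable {K A D : Type*} [CommRing K] [Ring A] [Algebra K A] [AddCommGroup D]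

def rootQuadratic (Δ : Finset D) (E : D → A) (c : D → K) : A :=
  ∑ α ∈ Δ, c α • (E (-α) * E α)

theorem sum_sum_smul_lie_eq_sum_sum_smul_anticomm {Δ : Finset D} (hΔ : ∀ a ∈ Δ, -a ∈ Δ)
    {w : D → D → K} (hw_left : ∀ a b, w (-a) b = w a b) (hw_right : ∀ a b, w a (-b) = w a b)
    (E : D → A) :
    ∑ α ∈ Δ, ∑ β ∈ Δ, w α β • ⁅E (-α) * E α, E (-β) * E β⁆ =
      ∑ a ∈ Δ, ∑ b ∈ Δ, w a b • anticomm (E a) (anticomm (E b) ⁅E (-a), E (-b)⁆) := by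
  have neg_left (F : D → D → A) :
      ∑ a ∈ Δ, ∑ b ∈ Δ, w a b • F (-a) b = ∑ a ∈ Δ, ∑ b ∈ Δ, w a b • F a b := by
    rw [← sum_comp_neg_of_neg_mem hΔ]; simp only [hw_left, neg_neg]
  have neg_right (F : D → D → A) :
      ∑ a ∈ Δ, ∑ b ∈ Δ, w a b • F a (-b) = ∑ a ∈ Δ, ∑ b ∈ Δ, w a b • F a b := by
    refine sum_congr rfl fun a _ => ?_
    rw [← sum_comp_neg_of_neg_mem hΔ]; simp only [hw_right, neg_neg]
  have h₁ := neg_left fun a b => E a * ⁅E (-a), E (-b)⁆ * E b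
  have h₂ := neg_left fun a b => E a * E (-b) * ⁅E (-a), E b⁆
  have h₂' := neg_right fun a b => E a * E b * ⁅E (-a), E (-b)⁆
  have h₄ := neg_right fun a b => E b * ⁅E (-a), E (-b)⁆ * E a
  simp only [neg_neg] at h₁ h₂ h₂' h₄
  simp only [lie_mul_mul, smul_add, sum_add_distrib, h₁, h₂, h₂', h₄]
  simp only [← sum_add_distrib, ← smul_add, anticomm]
  refine sum_congr rfl fun a _ => sum_congr rfl fun b _ => ?_
  congr 1
  noncomm_ring

variable [DecidableEq D]

theorem sum_sum_smul_anticomm_eq_sum_rootTriangles {Δ : Finset D} (hΔ : ∀ a ∈ Δ, -a ∈ Δ)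
    {w : D → D → K} (hw_diag : ∀ a, w a (-a) = 0) {E : D → A} {N : D → D → K}
    (hbr : ∀ a b c, (a, b, c) ∈ rootTriangles Δ → ⁅E a, E b⁆ = N a b • E (-c))
    (hvanish : ∀ a ∈ Δ, ∀ b ∈ Δ, a + b ≠ 0 → a + b ∉ Δ → ⁅E a, E b⁆ = 0) :
    ∑ a ∈ Δ, ∑ b ∈ Δ, w a b • anticomm (E a) (anticomm (E b) ⁅E (-a), E (-b)⁆) =
      ∑ t ∈ rootTriangles Δ, (w t.1 t.2.1 * N (-t.1) (-t.2.1)) •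
        anticomm (E t.1) (anticomm (E t.2.1) (E t.2.2)) := by
  rw [← sum_product', ← sum_filter_of_ne (p := fun p : D × D => -(p.1 + p.2) ∈ Δ)]
  · refine sum_nbij' (fun p => (p.1, p.2, -(p.1 + p.2))) (fun t => (t.1, t.2.1)) ?_ ?_
      (fun _ _ => rfl) ?_ ?_
    · rintro ⟨a, b⟩ hp
      simp only [mem_filter, mem_product] at hp
      exact mem_rootTriangles.mpr ⟨hp.1.1, hp.1.2, hp.2, add_neg_cancel _⟩
    · rintro ⟨a, b, c⟩ ht
      obtain ⟨ha, hb, hc, h⟩ := mem_rootTriangles.mp ht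
      simpa only [mem_filter, mem_product, ← eq_neg_of_add_eq_zero_right h] using ⟨⟨ha, hb⟩, hc⟩
    · rintro ⟨a, b, c⟩ ht
      obtain ⟨-, -, -, h⟩ := mem_rootTriangles.mp ht
      simp only [← eq_neg_of_add_eq_zero_right h]
    · rintro ⟨a, b⟩ hp
      simp only [mem_filter, mem_product] at hp
      have ht : (-a, -b, a + b) ∈ rootTriangles Δ := mem_rootTriangles.mpr
        ⟨hΔ a hp.1.1, hΔ b hp.1.2, neg_neg (a + b) ▸ hΔ _ hp.2, by abel⟩
      simp only [hbr _ _ _ ht, anticomm, mul_smul_comm, smul_mul_assoc, ← smul_add, smul_smul]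
  · rintro ⟨a, b⟩ hp hne
    simp only [mem_product] at hp
    by_contra hout
    apply hne
    by_cases hab : a + b = 0
    · rw [eq_neg_of_add_eq_zero_right hab, hw_diag, zero_smul]
    · have hab' : -a + -b ∉ Δ := by rwa [← neg_add]
      have hne' : -a + -b ≠ 0 := by rwa [← neg_add, neg_ne_zero]
      simp [hvanish _ (hΔ a hp.1) _ (hΔ b hp.2) hne' hab', anticomm]

theorem cyclic_sum_smul_anticomm_of_mem_rootTriangles {Δ : Finset D} (hΔ : ∀ a ∈ Δ, -a ∈ Δ)
    {w : D → D → K} (hw : ∀ a b c, (a, b, c) ∈ rootTriangles Δ → w a b + w b c + w c a = 0)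
    {E : D → A} {N : D → D → K}
    (hbr : ∀ a b c, (a, b, c) ∈ rootTriangles Δ → ⁅E a, E b⁆ = N a b • E (-c))
    (hN : ∀ a b c, (a, b, c) ∈ rootTriangles Δ → N b c = N a b)
    {a b c : D} (ht : (a, b, c) ∈ rootTriangles Δ) :
    (w a b * N (-a) (-b)) • anticomm (E a) (anticomm (E b) (E c)) +
        (w b c * N (-b) (-c)) • anticomm (E b) (anticomm (E c) (E a)) +
        (w c a * N (-c) (-a)) • anticomm (E c) (anticomm (E a) (E b)) =
      (N (-a) (-b) * N a b) • (w b c • ⁅E (-a), E a⁆ - w a b • ⁅E (-b), E b⁆) := by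
  have ht' := rotateTriple_mem_rootTriangles.mpr ht
  have ht'' := rotateTriple_mem_rootTriangles.mpr ht'
  have hn := neg_mem_rootTriangles hΔ ht
  have hn' := rotateTriple_mem_rootTriangles.mpr hn
  simp only [rotateTriple, Equiv.coe_fn_mk, Prod.neg_mk] at ht' ht'' hn hn'
  have hcyc := smul_anticomm_anticomm_cyclic (hw a b c ht) (E a) (E b) (E c)
  rw [hbr _ _ _ ht', hbr _ _ _ ht'', hN _ _ _ ht', hN _ _ _ ht, smul_lie, smul_lie] at hcyc
  rw [hN _ _ _ hn', hN _ _ _ hn]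
  linear_combination (norm := module) N (-a) (-b) • hcyc

theorem three_smul_sum_rootTriangles_smul_anticomm {Δ : Finset D} (hΔ : ∀ a ∈ Δ, -a ∈ Δ)
    {w : D → D → K} (hw : ∀ a b c, (a, b, c) ∈ rootTriangles Δ → w a b + w b c + w c a = 0)
    {E : D → A} {N : D → D → K}
    (hbr : ∀ a b c, (a, b, c) ∈ rootTriangles Δ → ⁅E a, E b⁆ = N a b • E (-c))
    (hN : ∀ a b c, (a, b, c) ∈ rootTriangles Δ → N b c = N a b) :
    (3 : K) • ∑ t ∈ rootTriangles Δ, (w t.1 t.2.1 * N (-t.1) (-t.2.1)) •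
        anticomm (E t.1) (anticomm (E t.2.1) (E t.2.2)) =
      ∑ t ∈ rootTriangles Δ, (N (-t.1) (-t.2.1) * N t.1 t.2.1) •
        (w t.2.1 t.2.2 • ⁅E (-t.1), E t.1⁆ - w t.1 t.2.1 • ⁅E (-t.2.1), E t.2.1⁆) := by
  set f : D × D × D → A := fun t => (w t.1 t.2.1 * N (-t.1) (-t.2.1)) •
    anticomm (E t.1) (anticomm (E t.2.1) (E t.2.2))
  have hrot := sum_rootTriangles_rotateTriple Δ f
  have hrot2 := sum_rootTriangles_rotateTriple Δ (f ∘ rotateTriple D)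
  simp only [Function.comp_apply, hrot] at hrot2
  calc (3 : K) • ∑ t ∈ rootTriangles Δ, f t
      = ∑ t ∈ rootTriangles Δ, f t + ∑ t ∈ rootTriangles Δ, f (rotateTriple D t) +
          ∑ t ∈ rootTriangles Δ, f (rotateTriple D (rotateTriple D t)) := by
        rw [hrot, hrot2]; module
    _ = _ := by
      rw [← sum_add_distrib, ← sum_add_distrib]
      refine sum_congr rfl ?_
      rintro ⟨a, b, c⟩ ht
      exact cyclic_sum_smul_anticomm_of_mem_rootTriangles hΔ hw hbr hN ht

end RootVectors

section CharZero

variable {K A D : Type*} [Field K] [CharZero K] [Ring A] [Algebra K A] [AddCommGroup D]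
  [DecidableEq D]

theorem sum_rootTriangles_smul_lie_eq_zero {Δ : Finset D} (hΔ : ∀ a ∈ Δ, -a ∈ Δ)
    {w : D → D → K} (hw_left : ∀ a b, w (-a) b = w a b) (hw_right : ∀ a b, w a (-b) = w a b)
    (E : D → A) (N : D → D → K) :
    ∑ t ∈ rootTriangles Δ, (N (-t.1) (-t.2.1) * N t.1 t.2.1) •
      (w t.2.1 t.2.2 • ⁅E (-t.1), E t.1⁆ - w t.1 t.2.1 • ⁅E (-t.2.1), E t.2.1⁆) = 0 := by
  refine eq_zero_of_self_eq_neg K ?_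
  conv_lhs => rw [← sum_rootTriangles_neg hΔ]
  rw [← sum_neg_distrib]
  refine sum_congr rfl fun t _ => ?_
  simp only [Prod.fst_neg, Prod.snd_neg, neg_neg, hw_left, hw_right]
  rw [← lie_skew (E t.1), ← lie_skew (E t.2.1), mul_comm]
  module

theorem lie_rootQuadratic_eq_zero {Δ : Finset D} (hΔ : ∀ a ∈ Δ, -a ∈ Δ) {E : D → A}
    {N : D → D → K} (hbr : ∀ α ∈ Δ, ∀ β ∈ Δ, α + β ∈ Δ → ⁅E α, E β⁆ = N α β • E (α + β))
    (hvanish : ∀ α ∈ Δ, ∀ β ∈ Δ, α + β ≠ 0 → α + β ∉ Δ → ⁅E α, E β⁆ = 0)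
    (hN : ∀ a b c, (a, b, c) ∈ rootTriangles Δ → N b c = N a b) {c d : D → K}
    (hc : ∀ a, c (-a) = c a) (hd : ∀ a, d (-a) = d a)
    (hcd : ∀ a b g, (a, b, g) ∈ rootTriangles Δ →
      (c a * d b - c b * d a) + (c b * d g - c g * d b) + (c g * d a - c a * d g) = 0) :
    ⁅rootQuadratic Δ E c, rootQuadratic Δ E d⁆ = 0 := by
  set w : D → D → K := fun a b => c a * d b - c b * d a
  have hw_left (a b : D) : w (-a) b = w a b := by simp only [w, hc, hd]
  have hw_right (a b : D) : w a (-b) = w a b := by simp only [w, hc, hd]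
  have hw_diag (a : D) : w a (-a) = 0 := by simp only [w, hc, hd, sub_self]
  have hbrT (a b c) (ht : (a, b, c) ∈ rootTriangles Δ) :=
    lie_eq_smul_of_mem_rootTriangles hΔ hbr ht
  have hcubic := three_smul_sum_rootTriangles_smul_anticomm hΔ hcd hbrT hN
  rw [sum_rootTriangles_smul_lie_eq_zero hΔ hw_left hw_right] at hcubic
  have h2 := two_smul_lie_sum_smul Δ (fun α => E (-α) * E α) c d
  rw [sum_sum_smul_lie_eq_sum_sum_smul_anticomm hΔ hw_left hw_right,
    sum_sum_smul_anticomm_eq_sum_rootTriangles hΔ hw_diag hbrT hvanish,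
    (smul_eq_zero.mp hcubic).resolve_left three_ne_zero] at h2
  exact (smul_eq_zero.mp h2).resolve_left two_ne_zero

end CharZero

theorem structureConst_rotate {K L D : Type*} [CommRing K] [LieRing L] [LieAlgebra K L]
    [AddCommGroup D] [DecidableEq D] {Δ : Finset D} (hΔ : ∀ a ∈ Δ, -a ∈ Δ) {e : D → L}
    {B : L →ₗ[K] L →ₗ[K] K} (hBinv : ∀ x y z : L, B ⁅x, y⁆ z = B x ⁅y, z⁆)
    (hnorm : ∀ α ∈ Δ, B (e α) (e (-α)) = 1) {N : D → D → K}
    (hbr : ∀ α ∈ Δ, ∀ β ∈ Δ, α + β ∈ Δ → ⁅e α, e β⁆ = N α β • e (α + β))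
    {a b c : D} (ht : (a, b, c) ∈ rootTriangles Δ) : N b c = N a b := by
  obtain ⟨ha, -, hc, -⟩ := mem_rootTriangles.mp ht
  have hnorm_c := hnorm (-c) (hΔ c hc)
  rw [neg_neg] at hnorm_c
  calc N b c = B (e a) ⁅e b, e c⁆ := by
        rw [lie_eq_smul_of_mem_rootTriangles hΔ hbr (rotateTriple_mem_rootTriangles.mpr ht),
          map_smul, hnorm a ha, smul_eq_mul, mul_one]
    _ = B ⁅e a, e b⁆ (e c) := (hBinv _ _ _).symm
    _ = N a b := by
        rw [lie_eq_smul_of_mem_rootTriangles hΔ hbr ht, map_smul, LinearMap.smul_apply, hnorm_c,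
          smul_eq_mul, mul_one]

theorem dual_div_cyclic_eq_zero {K H : Type*} [Field K] [AddCommGroup H] [Module K H]
    {a b g : Module.Dual K H} (h : a + b + g = 0) {μ : H} (ha : a μ ≠ 0) (hb : b μ ≠ 0)
    (hg : g μ ≠ 0) (x y : H) :
    (a x / a μ * (b y / b μ) - b x / b μ * (a y / a μ)) +
        (b x / b μ * (g y / g μ) - g x / g μ * (b y / b μ)) +
        (g x / g μ * (a y / a μ) - a x / a μ * (g y / g μ)) = 0 := by
  obtain rfl := eq_neg_of_add_eq_zero_right h
  simp only [LinearMap.neg_apply, LinearMap.add_apply, neg_ne_zero] at hg ⊢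
  field_simp
  ring

theorem T_operators_commute_general
    {H : Type*} [AddCommGroup H] [Module ℂ H]
    {L : Type*} [LieRing L] [LieAlgebra ℂ L]
    (Δ : Finset (Module.Dual ℂ H)) (e : Module.Dual ℂ H → L)
    (B : L →ₗ[ℂ] L →ₗ[ℂ] ℂ)
    (hBinv : ∀ x y z : L, B ⁅x, y⁆ z = B x ⁅y, z⁆)
    (hnegmem : ∀ α ∈ Δ, -α ∈ Δ)
    (hnorm : ∀ α ∈ Δ, B (e α) (e (-α)) = 1)
    (N : Module.Dual ℂ H → Module.Dual ℂ H → ℂ)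
    (hbr : ∀ α ∈ Δ, ∀ β ∈ Δ, α + β ∈ Δ → ⁅e α, e β⁆ = N α β • e (α + β))
    (hvanish : ∀ α ∈ Δ, ∀ β ∈ Δ, α + β ≠ 0 → α + β ∉ Δ → ⁅e α, e β⁆ = 0)
    (μ : H) (hreg : ∀ α ∈ Δ, α μ ≠ 0) (lam ν : H) :
    (∑ α ∈ Δ, (α lam / α μ) •
        ((UniversalEnvelopingAlgebra.ι ℂ : L →ₗ⁅ℂ⁆ _) (e (-α)) *
          (UniversalEnvelopingAlgebra.ι ℂ : L →ₗ⁅ℂ⁆ _) (e α))) *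
      (∑ α ∈ Δ, (α ν / α μ) •
        ((UniversalEnvelopingAlgebra.ι ℂ : L →ₗ⁅ℂ⁆ _) (e (-α)) *
          (UniversalEnvelopingAlgebra.ι ℂ : L →ₗ⁅ℂ⁆ _) (e α)))
    = (∑ α ∈ Δ, (α ν / α μ) •
        ((UniversalEnvelopingAlgebra.ι ℂ : L →ₗ⁅ℂ⁆ _) (e (-α)) *
          (UniversalEnvelopingAlgebra.ι ℂ : L →ₗ⁅ℂ⁆ _) (e α))) *
      (∑ α ∈ Δ, (α lam / α μ) •
        ((UniversalEnvelopingAlgebra.ι ℂ : L →ₗ⁅ℂ⁆ _) (e (-α)) *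
          (UniversalEnvelopingAlgebra.ι ℂ : L →ₗ⁅ℂ⁆ _) (e α))) := by
  classical
  set ι : L →ₗ⁅ℂ⁆ UniversalEnvelopingAlgebra ℂ L := UniversalEnvelopingAlgebra.ι ℂ
  have hbrU (α) (hα : α ∈ Δ) (β) (hβ : β ∈ Δ) (hαβ : α + β ∈ Δ) :
      ⁅ι (e α), ι (e β)⁆ = N α β • ι (e (α + β)) := by
    rw [← ι.map_lie, hbr α hα β hβ hαβ, map_smul]
  have hvanishU (α) (hα : α ∈ Δ) (β) (hβ : β ∈ Δ) (hne : α + β ≠ 0) (hout : α + β ∉ Δ) :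
      ⁅ι (e α), ι (e β)⁆ = 0 := by
    rw [← ι.map_lie, hvanish α hα β hβ hne hout, map_zero]
  have hratio (x : H) (α : Module.Dual ℂ H) : (-α) x / (-α) μ = α x / α μ := by
    simp only [LinearMap.neg_apply, neg_div_neg_eq]
  have hcomm := lie_rootQuadratic_eq_zero hnegmem hbrU hvanishU
    (fun _ _ _ ht => structureConst_rotate hnegmem hBinv hnorm hbr ht) (hratio lam) (hratio ν)
    fun a b g ht => by
      obtain ⟨ha, hb, hg, h⟩ := mem_rootTriangles.mp ht
      exact dual_div_cyclic_eq_zero h (hreg a ha) (hreg b hb) (hreg g hg) lam ν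
  rwa [Ring.lie_def, sub_eq_zero] at hcomm

theorem T_operators_commute
    {H : Type*} [AddCommGroup H] [Module ℂ H]
    {L : Type*} [LieRing L] [LieAlgebra ℂ L]
    (Δ : Finset (Module.Dual ℂ H)) (e : Module.Dual ℂ H → L) (hc : H →ₗ[ℂ] L)
    (B : L →ₗ[ℂ] L →ₗ[ℂ] ℂ)
    (hBsymm : ∀ x y : L, B x y = B y x)
    (hBinv : ∀ x y z : L, B ⁅x, y⁆ z = B x ⁅y, z⁆)
    (hnegmem : ∀ α ∈ Δ, -α ∈ Δ) (h0 : (0 : Module.Dual ℂ H) ∉ Δ)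
    (hnorm : ∀ α ∈ Δ, B (e α) (e (-α)) = 1)
    (N : Module.Dual ℂ H → Module.Dual ℂ H → ℂ)
    (hbr : ∀ α ∈ Δ, ∀ β ∈ Δ, α + β ∈ Δ → ⁅e α, e β⁆ = N α β • e (α + β))
    (hvanish : ∀ α ∈ Δ, ∀ β ∈ Δ, α + β ≠ 0 → α + β ∉ Δ → ⁅e α, e β⁆ = 0)
    (t : Module.Dual ℂ H → H)
    (hcartan : ∀ α ∈ Δ, ⁅e α, e (-α)⁆ = hc (t α))
    (hweight : ∀ α ∈ Δ, ∀ x : H, ⁅hc x, e α⁆ = α x • e α)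
    (μ : H) (hreg : ∀ α ∈ Δ, α μ ≠ 0) (lam ν : H) :
    (∑ α ∈ Δ, (α lam / α μ) •
        ((UniversalEnvelopingAlgebra.ι ℂ : L →ₗ⁅ℂ⁆ _) (e (-α)) *
          (UniversalEnvelopingAlgebra.ι ℂ : L →ₗ⁅ℂ⁆ _) (e α))) *
      (∑ α ∈ Δ, (α ν / α μ) •
        ((UniversalEnvelopingAlgebra.ι ℂ : L →ₗ⁅ℂ⁆ _) (e (-α)) *
          (UniversalEnvelopingAlgebra.ι ℂ : L →ₗ⁅ℂ⁆ _) (e α)))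
    = (∑ α ∈ Δ, (α ν / α μ) •
        ((UniversalEnvelopingAlgebra.ι ℂ : L →ₗ⁅ℂ⁆ _) (e (-α)) *
          (UniversalEnvelopingAlgebra.ι ℂ : L →ₗ⁅ℂ⁆ _) (e α))) *
      (∑ α ∈ Δ, (α lam / α μ) •
        ((UniversalEnvelopingAlgebra.ι ℂ : L →ₗ⁅ℂ⁆ _) (e (-α)) *
          (UniversalEnvelopingAlgebra.ι ℂ : L →ₗ⁅ℂ⁆ _) (e α))) :=
  T_operators_commute_general Δ e B hBinv hnegmem hnorm N hbr hvanish μ hreg lam ν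
end

section
/- Let M(Λ) be the Verma module over the Kac–Moody algebra without Serre relations g, generated by v with n_+ v = 0 and hv = ⟨Λ,h⟩v. There is a unique bilinear form S on M(Λ) with S(v,v) = 1, S(e_i x, y) = S(x, f_i y) and S(f_i x, y) = S(x, e_i y) for all x,y and i; moreover S is symmetric and distinct weight spaces M(Λ)_λ are S-orthogonal. -/
noncomputable section

namespace KacMoodyFree

inductive Gen (H : Type*) (r : ℕ) : Type _
  | e : Fin r → Gen H r
  | f : Fin r → Gen H r
  | h : H → Gen H r

variable {H : Type*} [AddCommGroup H] [Module ℂ H] {r : ℕ}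

/-- Defining relations of the Kac–Moody Lie algebra without Serre relations. -/
def rels (α : Fin r → Module.Dual ℂ H) (hv : Fin r → H) :
    Set (FreeLieAlgebra ℂ (Gen H r)) :=
  let of : Gen H r → FreeLieAlgebra ℂ (Gen H r) := FreeLieAlgebra.of ℂ
  {x | (∃ a b : H, x = of (Gen.h (a + b)) - of (Gen.h a) - of (Gen.h b)) ∨
       (∃ (c : ℂ) (a : H), x = of (Gen.h (c • a)) - c • of (Gen.h a)) ∨
       (∃ a b : H, x = ⁅of (Gen.h a), of (Gen.h b)⁆) ∨
       (∃ (a : H) (i : Fin r), x = ⁅of (Gen.h a), of (Gen.e i)⁆ - α i a • of (Gen.e i)) ∨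
       (∃ (a : H) (i : Fin r), x = ⁅of (Gen.h a), of (Gen.f i)⁆ + α i a • of (Gen.f i)) ∨
       (∃ i j : Fin r, x = ⁅of (Gen.e i), of (Gen.f j)⁆ -
          (if i = j then of (Gen.h (hv i)) else 0))}

def relIdeal (α : Fin r → Module.Dual ℂ H) (hv : Fin r → H) :
    LieIdeal ℂ (FreeLieAlgebra ℂ (Gen H r)) :=
  LieSubmodule.lieSpan ℂ _ (rels α hv)

/-- The Kac–Moody Lie algebra without Serre relations. -/
def KM (α : Fin r → Module.Dual ℂ H) (hv : Fin r → H) : Type _ :=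
  FreeLieAlgebra ℂ (Gen H r) ⧸ relIdeal α hv

variable (α : Fin r → Module.Dual ℂ H) (hv : Fin r → H)

instance : LieRing (KM α hv) :=
  inferInstanceAs (LieRing (FreeLieAlgebra ℂ (Gen H r) ⧸ relIdeal α hv))
instance : LieAlgebra ℂ (KM α hv) :=
  inferInstanceAs (LieAlgebra ℂ (FreeLieAlgebra ℂ (Gen H r) ⧸ relIdeal α hv))

def E (i : Fin r) : KM α hv :=
  LieSubmodule.Quotient.mk' (relIdeal α hv) (FreeLieAlgebra.of ℂ (Gen.e i))

def F (i : Fin r) : KM α hv :=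
  LieSubmodule.Quotient.mk' (relIdeal α hv) (FreeLieAlgebra.of ℂ (Gen.f i))

def Hg (x : H) : KM α hv :=
  LieSubmodule.Quotient.mk' (relIdeal α hv) (FreeLieAlgebra.of ℂ (Gen.h x))

end KacMoodyFree

/-
Transport `M` to the free algebra on the `f_i` via `φ`. For `x = f_{i₁} ⋯ f_{iₖ} v` put
`S(x, y) :=` the coefficient of `v` in `e_{iₖ} ⋯ e_{i₁} y`; then `S(f_i x, y) = S(x, e_i y)`
holds by construction. Moving `h` past the `e`'s shows `S(h x, y) = S(x, h y)`, and with
`[e_i, f_j] = δ_{ij} h_i` an induction on `x` gives `S(e_i x, y) = S(x, f_i y)`. Conversely,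
`f`-contravariance reduces any such form to `S(v, ·)`, which `e_i v = 0` pins down to the
coefficient of `v`: this is uniqueness. Since `S.flip` is again contravariant, uniqueness makes
`S` symmetric; and since every `h` is self-adjoint for `S`, weight spaces whose weights differ
(which linear independence of the `α_i` guarantees for `λ ≠ μ`) are orthogonal.
-/

theorem FreeAlgebra.induction_ι_mul {R X : Type*} [CommSemiring R]
    {motive : FreeAlgebra R X → Prop} (one : motive 1)
    (ι_mul : ∀ x a, motive a → motive (FreeAlgebra.ι R x * a))
    (add : ∀ a b, motive a → motive b → motive (a + b))
    (smul : ∀ (c : R) a, motive a → motive (c • a)) (a : FreeAlgebra R X) : motive a := by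
  suffices h : ∀ b, motive b → motive (a * b) from mul_one a ▸ h 1 one
  induction a with
  | grade0 c => exact fun b hb => by simpa [Algebra.smul_def] using smul c b hb
  | grade1 x => exact ι_mul x
  | mul a a' ha ha' => exact fun b hb => mul_assoc a a' b ▸ ha _ (ha' b hb)
  | add a a' ha ha' => exact fun b hb => add_mul a a' b ▸ add _ _ (ha b hb) (ha' b hb)

theorem exists_sum_mul_apply_ne {K V ι : Type*} [Field K] [AddCommGroup V] [Module K V]
    [Fintype ι] {α : ι → Module.Dual K V} (hα : LinearIndependent K α) {c d : ι → K}
    (hcd : c ≠ d) : ∃ a : V, ∑ i, c i * α i a ≠ ∑ i, d i * α i a := by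
  by_contra! h
  refine hcd (funext (Fintype.linearIndependent_iffₛ.mp hα c d (LinearMap.ext fun a => ?_)))
  simpa using h a

theorem LinearMap.apply_eq_zero_of_eigenvalues_ne {R M : Type*} [CommRing R] [IsDomain R]
    [AddCommGroup M] [Module R M] (S : M →ₗ[R] M →ₗ[R] R) (T : Module.End R M)
    {x y : M} {a b : R} (hS : S (T x) y = S x (T y)) (hx : T x = a • x) (hy : T y = b • y)
    (hab : a ≠ b) : S x y = 0 := by
  have : (a - b) * S x y = 0 := by
    rw [sub_mul, ← smul_eq_mul, ← LinearMap.smul_apply, ← map_smul, ← hx, hS, hy, map_smul,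
      smul_eq_mul, sub_self]
  exact (mul_eq_zero.mp this).resolve_left (sub_ne_zero.mpr hab)

namespace KacMoodyFree

variable {H : Type*} [AddCommGroup H] [Module ℂ H] {r : ℕ}
  {α : Fin r → Module.Dual ℂ H} {hv : Fin r → H}

theorem mk'_eq_zero_of_mem_rels {x : FreeLieAlgebra ℂ (Gen H r)} (hx : x ∈ rels α hv) :
    LieSubmodule.Quotient.mk' (relIdeal α hv) x = 0 :=
  (LieSubmodule.Quotient.mk_eq_zero _).2 (LieSubmodule.subset_lieSpan hx)

theorem lie_E_F (i j : Fin r) :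
    ⁅E α hv i, F α hv j⁆ = if i = j then Hg α hv (hv i) else 0 := by
  have h := mk'_eq_zero_of_mem_rels (α := α) (hv := hv)
    (Or.inr <| Or.inr <| Or.inr <| Or.inr <| Or.inr ⟨i, j, rfl⟩)
  rw [map_sub, sub_eq_zero] at h
  refine h.trans ?_
  split_ifs
  exacts [rfl, map_zero _]

theorem lie_Hg_E (a : H) (i : Fin r) : ⁅Hg α hv a, E α hv i⁆ = α i a • E α hv i := by
  have h := mk'_eq_zero_of_mem_rels (α := α) (hv := hv)
    (Or.inr <| Or.inr <| Or.inr <| Or.inl ⟨a, i, rfl⟩)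
  rw [map_sub, sub_eq_zero, map_smul] at h
  exact h

theorem lie_Hg_F (a : H) (i : Fin r) : ⁅Hg α hv a, F α hv i⁆ = -(α i a • F α hv i) := by
  have h := mk'_eq_zero_of_mem_rels (α := α) (hv := hv)
    (Or.inr <| Or.inr <| Or.inr <| Or.inr <| Or.inl ⟨a, i, rfl⟩)
  rw [map_add, add_eq_zero_iff_eq_neg, map_smul] at h
  exact h

variable {M : Type*} [AddCommGroup M] [LieRingModule (KM α hv) M]

theorem lie_E_lie_F (i j : Fin r) (x : M) :
    ⁅E α hv i, ⁅F α hv j, x⁆⁆ =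
      ⁅F α hv j, ⁅E α hv i, x⁆⁆ + if i = j then ⁅Hg α hv (hv i), x⁆ else 0 := by
  rw [leibniz_lie, lie_E_F, add_comm, apply_ite (⁅·, x⁆), zero_lie]

variable [Module ℂ M]

variable (α hv) in
structure IsVermaModule (Λ : Module.Dual ℂ H) (v : M)
    (φ : FreeAlgebra ℂ (Fin r) ≃ₗ[ℂ] M) : Prop where
  lie_E : ∀ i, ⁅E α hv i, v⁆ = 0
  lie_Hg : ∀ a, ⁅Hg α hv a, v⁆ = Λ a • v
  φ_one : φ 1 = v
  φ_ι_mul : ∀ i w, φ (FreeAlgebra.ι ℂ i * w) = ⁅F α hv i, φ w⁆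

variable (α hv) in
def IsContravariantForm (v : M) (S : M →ₗ[ℂ] M →ₗ[ℂ] ℂ) : Prop :=
  S v v = 1 ∧
    (∀ (i : Fin r) (x y : M), S ⁅E α hv i, x⁆ y = S x ⁅F α hv i, y⁆) ∧
    (∀ (i : Fin r) (x y : M), S ⁅F α hv i, x⁆ y = S x ⁅E α hv i, y⁆)

theorem IsContravariantForm.flip {v : M} {S : M →ₗ[ℂ] M →ₗ[ℂ] ℂ}
    (hS : IsContravariantForm α hv v S) : IsContravariantForm α hv v S.flip :=
  ⟨hS.1, fun i x y => (hS.2.2 i y x).symm, fun i x y => (hS.2.1 i y x).symm⟩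

def highestWeightCoeff (φ : FreeAlgebra ℂ (Fin r) ≃ₗ[ℂ] M) : M →ₗ[ℂ] ℂ :=
  FreeAlgebra.algebraMapInv.toLinearMap ∘ₗ φ.symm.toLinearMap

namespace IsVermaModule

variable {Λ : Module.Dual ℂ H} {v : M} {φ : FreeAlgebra ℂ (Fin r) ≃ₗ[ℂ] M}

theorem φ_symm_lie_F (hM : IsVermaModule α hv Λ v φ) (i : Fin r) (x : M) :
    φ.symm ⁅F α hv i, x⁆ = FreeAlgebra.ι ℂ i * φ.symm x :=
  φ.symm_apply_eq.2 (by rw [hM.φ_ι_mul, φ.apply_symm_apply])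

theorem induction_on (hM : IsVermaModule α hv Λ v φ) {motive : M → Prop} (base : motive v)
    (lie_F : ∀ i x, motive x → motive ⁅F α hv i, x⁆)
    (add : ∀ x y, motive x → motive y → motive (x + y))
    (smul : ∀ (c : ℂ) x, motive x → motive (c • x)) (x : M) : motive x := by
  rw [← φ.apply_symm_apply x]
  induction φ.symm x using FreeAlgebra.induction_ι_mul with
  | one => rwa [hM.φ_one]
  | ι_mul i a ha => rw [hM.φ_ι_mul]; exact lie_F i _ ha
  | add a b ha hb => rw [map_add]; exact add _ _ ha hb
  | smul c a ha => rw [map_smul]; exact smul c _ ha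

theorem highestWeightCoeff_v (hM : IsVermaModule α hv Λ v φ) : highestWeightCoeff φ v = 1 := by
  simp [highestWeightCoeff, ← hM.φ_one]

theorem highestWeightCoeff_lie_F (hM : IsVermaModule α hv Λ v φ) (i : Fin r) (x : M) :
    highestWeightCoeff φ ⁅F α hv i, x⁆ = 0 := by
  simp [highestWeightCoeff, hM.φ_symm_lie_F, FreeAlgebra.algebraMapInv]

end IsVermaModule

variable [LieModule ℂ (KM α hv) M]

theorem lie_Hg_lie_E (a : H) (i : Fin r) (x : M) :
    ⁅Hg α hv a, ⁅E α hv i, x⁆⁆ = ⁅E α hv i, ⁅Hg α hv a, x⁆⁆ + α i a • ⁅E α hv i, x⁆ := by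
  rw [leibniz_lie, lie_Hg_E, smul_lie, add_comm]

theorem lie_Hg_lie_F (a : H) (i : Fin r) (x : M) :
    ⁅Hg α hv a, ⁅F α hv i, x⁆⁆ = ⁅F α hv i, ⁅Hg α hv a, x⁆⁆ - α i a • ⁅F α hv i, x⁆ := by
  rw [leibniz_lie, lie_Hg_F, neg_lie, smul_lie, neg_add_eq_sub]

variable (α hv) in
def lieEAntiAction : FreeAlgebra ℂ (Fin r) →ₐ[ℂ] (Module.End ℂ M)ᵐᵒᵖ :=
  FreeAlgebra.lift ℂ fun i => MulOpposite.op (LieModule.toEnd ℂ (KM α hv) M (E α hv i))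

variable (α hv) in
def contravariantForm (φ : FreeAlgebra ℂ (Fin r) ≃ₗ[ℂ] M) : M →ₗ[ℂ] M →ₗ[ℂ] ℂ :=
  LinearMap.mk₂ ℂ (fun x y => highestWeightCoeff φ ((lieEAntiAction α hv (φ.symm x)).unop y))
    (fun x x' y => by simp) (fun c x y => by simp) (fun x y y' => by simp)
    (fun c x y => by simp)

namespace IsVermaModule

variable {Λ : Module.Dual ℂ H} {v : M} {φ : FreeAlgebra ℂ (Fin r) ≃ₗ[ℂ] M}

theorem highestWeightCoeff_lie_Hg (hM : IsVermaModule α hv Λ v φ) (a : H) (x : M) :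
    highestWeightCoeff φ ⁅Hg α hv a, x⁆ = Λ a * highestWeightCoeff φ x := by
  induction x using hM.induction_on with
  | base => rw [hM.lie_Hg, map_smul, smul_eq_mul]
  | lie_F i x _ => simp only [lie_Hg_lie_F, map_sub, map_smul, hM.highestWeightCoeff_lie_F,
      smul_zero, sub_zero, mul_zero]
  | add x y hx hy => rw [lie_add, map_add, map_add, hx, hy, mul_add]
  | smul c x hx => rw [lie_smul, map_smul, map_smul, hx, smul_eq_mul, smul_eq_mul, mul_left_comm]

theorem contravariantForm_v_left (hM : IsVermaModule α hv Λ v φ) (y : M) :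
    contravariantForm α hv φ v y = highestWeightCoeff φ y := by
  simp [contravariantForm, ← hM.φ_one]

theorem contravariantForm_lie_F_left (hM : IsVermaModule α hv Λ v φ) (i : Fin r) (x y : M) :
    contravariantForm α hv φ ⁅F α hv i, x⁆ y = contravariantForm α hv φ x ⁅E α hv i, y⁆ := by
  simp [contravariantForm, hM.φ_symm_lie_F, lieEAntiAction]

theorem contravariantForm_lie_Hg (hM : IsVermaModule α hv Λ v φ) (a : H) (x y : M) :
    contravariantForm α hv φ ⁅Hg α hv a, x⁆ y = contravariantForm α hv φ x ⁅Hg α hv a, y⁆ := by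
  induction x using hM.induction_on generalizing y with
  | base => rw [hM.lie_Hg, map_smul, LinearMap.smul_apply, hM.contravariantForm_v_left,
      hM.contravariantForm_v_left, hM.highestWeightCoeff_lie_Hg, smul_eq_mul]
  | lie_F i x ih =>
    rw [lie_Hg_lie_F, map_sub, map_smul, LinearMap.sub_apply, LinearMap.smul_apply,
      hM.contravariantForm_lie_F_left, hM.contravariantForm_lie_F_left,
      hM.contravariantForm_lie_F_left, ih, eq_sub_of_add_eq (lie_Hg_lie_E a i y).symm, map_sub,
      map_smul]
  | add x x' hx hx' => simp only [lie_add, map_add, LinearMap.add_apply, hx, hx']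
  | smul c x hx => simp only [lie_smul, map_smul, LinearMap.smul_apply, hx]

theorem contravariantForm_lie_E_left (hM : IsVermaModule α hv Λ v φ) (i : Fin r) (x y : M) :
    contravariantForm α hv φ ⁅E α hv i, x⁆ y = contravariantForm α hv φ x ⁅F α hv i, y⁆ := by
  induction x using hM.induction_on generalizing y with
  | base => rw [hM.lie_E, map_zero, LinearMap.zero_apply, hM.contravariantForm_v_left,
      hM.highestWeightCoeff_lie_F]
  | lie_F j x ih =>
    rw [lie_E_lie_F, map_add, LinearMap.add_apply, hM.contravariantForm_lie_F_left, ih,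
      hM.contravariantForm_lie_F_left, lie_E_lie_F, map_add]
    congr 1
    by_cases hij : i = j
    · subst hij
      simp only [if_true, hM.contravariantForm_lie_Hg]
    · simp only [hij, Ne.symm hij, if_false, map_zero, LinearMap.zero_apply]
  | add x x' hx hx' => simp only [lie_add, map_add, LinearMap.add_apply, hx, hx']
  | smul c x hx => simp only [lie_smul, map_smul, LinearMap.smul_apply, hx]

theorem isContravariantForm_contravariantForm (hM : IsVermaModule α hv Λ v φ) :
    IsContravariantForm α hv v (contravariantForm α hv φ) :=
  ⟨(hM.contravariantForm_v_left v).trans hM.highestWeightCoeff_v,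
    hM.contravariantForm_lie_E_left, hM.contravariantForm_lie_F_left⟩

theorem eq_contravariantForm (hM : IsVermaModule α hv Λ v φ) {S : M →ₗ[ℂ] M →ₗ[ℂ] ℂ}
    (hS : IsContravariantForm α hv v S) : S = contravariantForm α hv φ := by
  have hS_v_left (y : M) : S v y = highestWeightCoeff φ y := by
    induction y using hM.induction_on with
    | base => rw [hS.1, hM.highestWeightCoeff_v]
    | lie_F i y _ =>
      rw [← hS.2.1, hM.lie_E, map_zero, LinearMap.zero_apply, hM.highestWeightCoeff_lie_F]
    | add y y' hy hy' => rw [map_add, map_add, hy, hy']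
    | smul c y hy => rw [map_smul, map_smul, hy]
  ext x y
  induction x using hM.induction_on generalizing y with
  | base => rw [hS_v_left, hM.contravariantForm_v_left]
  | lie_F i x ih => rw [hS.2.2, hM.contravariantForm_lie_F_left, ih]
  | add x x' hx hx' => simp only [map_add, LinearMap.add_apply, hx, hx']
  | smul c x hx => simp only [map_smul, LinearMap.smul_apply, hx]

end IsVermaModule

end KacMoodyFree

open KacMoodyFree

theorem verma_contravariant_form_exists_unique
    {H : Type*} [AddCommGroup H] [Module ℂ H] {r : ℕ}
    (α : Fin r → Module.Dual ℂ H) (hind : LinearIndependent ℂ α) (hv : Fin r → H)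
    (M : Type*) [AddCommGroup M] [Module ℂ M]
    [LieRingModule (KM α hv) M] [LieModule ℂ (KM α hv) M]
    (Λ : Module.Dual ℂ H) (v : M)
    (hhw1 : ∀ i : Fin r, ⁅E α hv i, v⁆ = 0)
    (hhw2 : ∀ x : H, ⁅Hg α hv x, v⁆ = Λ x • v)
    (φ : FreeAlgebra ℂ (Fin r) ≃ₗ[ℂ] M)
    (hφ1 : φ 1 = v)
    (hφmul : ∀ (i : Fin r) (w : FreeAlgebra ℂ (Fin r)),
      φ (FreeAlgebra.ι ℂ i * w) = ⁅F α hv i, φ w⁆) :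
    (∃! S : M →ₗ[ℂ] M →ₗ[ℂ] ℂ,
        S v v = 1 ∧
        (∀ (i : Fin r) (x y : M), S ⁅E α hv i, x⁆ y = S x ⁅F α hv i, y⁆) ∧
        (∀ (i : Fin r) (x y : M), S ⁅F α hv i, x⁆ y = S x ⁅E α hv i, y⁆)) ∧
    (∀ S : M →ₗ[ℂ] M →ₗ[ℂ] ℂ,
      (S v v = 1 ∧
        (∀ (i : Fin r) (x y : M), S ⁅E α hv i, x⁆ y = S x ⁅F α hv i, y⁆) ∧
        (∀ (i : Fin r) (x y : M), S ⁅F α hv i, x⁆ y = S x ⁅E α hv i, y⁆)) →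
      ((∀ x y : M, S x y = S y x) ∧
       (∀ lam mu : Fin r → ℕ, lam ≠ mu →
        ∀ x y : M,
          (∀ aH : H, ⁅Hg α hv aH, x⁆ = (Λ aH - ∑ i, (lam i : ℂ) * α i aH) • x) →
          (∀ aH : H, ⁅Hg α hv aH, y⁆ = (Λ aH - ∑ i, (mu i : ℂ) * α i aH) • y) →
          S x y = 0))) := by
  have hM : IsVermaModule α hv Λ v φ := ⟨hhw1, hhw2, hφ1, hφmul⟩
  refine ⟨⟨_, hM.isContravariantForm_contravariantForm, fun S hS => hM.eq_contravariantForm hS⟩,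
    fun S (hS : IsContravariantForm α hv v S) => ⟨fun x y => ?_, fun lam mu hne x y hx hy => ?_⟩⟩
  · have hflip := (hM.eq_contravariantForm hS.flip).trans (hM.eq_contravariantForm hS).symm
    exact LinearMap.congr_fun₂ hflip y x
  · obtain ⟨a, ha⟩ := exists_sum_mul_apply_ne hind (c := fun i => (lam i : ℂ))
      (d := fun i => (mu i : ℂ)) fun h => hne (funext fun i => Nat.cast_injective (congrFun h i))
    refine S.apply_eq_zero_of_eigenvalues_ne (LieModule.toEnd ℂ (KM α hv) M (Hg α hv a)) ?_ (hx a)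
      (hy a) (sub_right_injective.ne ha)
    rw [hM.eq_contravariantForm hS]
    exact hM.contravariantForm_lie_Hg a x y
end
end

section
/- Serre-relations-free Kac–Moody symmetrization of Cartan data: let h be a finite-dimensional complex vector space with nondegenerate symmetric bilinear form (,), h_1,...,h_r ∈ h linearly independent, and m_1,...,m_p > 0 (p ≤ r), m = m_1+...+m_p. Then there exist a finite-dimensional vector space h̃ with nondegenerate symmetric bilinear form (,)_1, linearly independent h̃_1,...,h̃_m ∈ h̃, and an injective linear map s: h → h̃ such that s(h_i) = (1/m_i) Σ_{j=1}^{m_i} h̃_{m(i)+j} (where m(i) = m_1+...+m_{i-1}) for i ≤ p, (h̃_j, s(h'))_1 = (h_{c(j)}, h') for all h' ∈ h and 1 ≤ j ≤ m (c the coloring function with |c^{-1}(i)| = m_i), and (h',h'') = (s(h'), s(h''))_1 for all h', h'' ∈ h. -/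
/-!
Take `h̃ = H × ℂ^M` with the orthogonal sum of `B` and the dot product, and `s = (·, 0)`. Put
`h̃ⱼ = (h (c j), eⱼ - mean of the eₖ with c k = c j)`. The second components sum to zero over each
colour class, which gives the averaging identity, and they are orthogonal to `s H`, which gives the
pairings. In a linear relation among the `h̃ⱼ` the colour-class sums of the coefficients vanish by
independence of the `hᵢ`; then the mean term drops out and the second component is the relation
itself.
-/

open Finset

open LinearMap (BilinForm)

section FiberCentered

variable {K ι κ : Type*} [Field K] [Fintype ι] [DecidableEq ι] [DecidableEq κ] (c : ι → κ)

def fiberCentered (j : ι) : ι → K :=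
  Pi.single j 1 - (#{k | c k = c j} : K)⁻¹ • ∑ k with c k = c j, Pi.single k 1

theorem sum_fiberCentered_eq_zero [CharZero K] (i : κ) :
    ∑ j with c j = i, fiberCentered (K := K) c j = 0 := by
  rcases eq_or_ne #{j | c j = i} 0 with hempty | hcard
  · rw [card_eq_zero.mp hempty, sum_empty]
  have hfib : ∀ j ∈ ({j | c j = i} : Finset ι), fiberCentered (K := K) c j =
      Pi.single j 1 - (#{k | c k = i} : K)⁻¹ • ∑ k with c k = i, Pi.single k 1 := by
    intro j hj
    simp only [fiberCentered, (mem_filter.mp hj).2]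
  rw [sum_congr rfl hfib, sum_sub_distrib, sum_const, ← Nat.cast_smul_eq_nsmul K, smul_smul,
    mul_inv_cancel₀ (Nat.cast_ne_zero.mpr hcard), one_smul, sub_self]

theorem sum_smul_fiberCentered [Fintype κ] (a : ι → K) (ha : ∀ i, ∑ j with c j = i, a j = 0) :
    ∑ j, a j • fiberCentered c j = a := by
  have hmean : ∑ j, a j • ((#{k | c k = c j} : K)⁻¹ • ∑ k with c k = c j, Pi.single k 1) = 0 := by
    rw [← sum_fiberwise univ c]
    refine sum_eq_zero fun i _ => ?_
    rw [sum_congr rfl fun j hj => by rw [(mem_filter.mp hj).2], ← sum_smul, ha, zero_smul]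
  simp only [fiberCentered, smul_sub, sum_sub_distrib, hmean, sub_zero]
  exact (pi_eq_sum_univ' a).symm

end FiberCentered

section ProdDotProduct

variable {K V ι : Type*} [Field K] [AddCommGroup V] [Module K V] [Fintype ι]

def prodDotProductForm (B : BilinForm K V) : BilinForm K (V × (ι → K)) :=
  B.compl₁₂ (LinearMap.fst K V _) (LinearMap.fst K V _) +
    (dotProductBilin K K).compl₁₂ (LinearMap.snd K V _) (LinearMap.snd K V _)

@[simp]
theorem prodDotProductForm_apply (B : BilinForm K V) (x y : V × (ι → K)) :
    prodDotProductForm B x y = B x.1 y.1 + x.2 ⬝ᵥ y.2 :=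
  rfl

theorem prodDotProductForm_isSymm {B : BilinForm K V} (hB : B.IsSymm) :
    (prodDotProductForm B : BilinForm K (V × (ι → K))).IsSymm :=
  ⟨fun x y => by rw [prodDotProductForm_apply, prodDotProductForm_apply, hB.eq, dotProduct_comm]⟩

theorem prodDotProductForm_separatingLeft {B : BilinForm K V} (hB : B.SeparatingLeft) :
    (prodDotProductForm B : BilinForm K (V × (ι → K))).SeparatingLeft := by
  classical
  rintro ⟨v, a⟩ hva
  have hv : v = 0 := hB v fun w => by simpa using hva (w, 0)
  have ha : a = 0 := funext fun k => by simpa [dotProduct_single] using hva (0, Pi.single k 1)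
  rw [hv, ha, Prod.mk_zero_zero]

end ProdDotProduct

section FiberLift

variable {K V ι κ : Type*} [Field K] [AddCommGroup V] [Module K V] [Fintype ι] [DecidableEq ι]
  [DecidableEq κ] (c : ι → κ) (g : κ → V)

def fiberLift (j : ι) : V × (ι → K) :=
  (g (c j), fiberCentered c j)

theorem sum_fiberLift [CharZero K] (i : κ) :
    ∑ j with c j = i, fiberLift (K := K) c g j = (#{j | c j = i} : K) • (g i, 0) := by
  ext : 1
  · simp only [fiberLift, Prod.fst_sum, Prod.smul_fst]
    rw [sum_congr rfl fun j hj => by rw [(mem_filter.mp hj).2], sum_const, Nat.cast_smul_eq_nsmul]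
  · simp only [fiberLift, Prod.snd_sum, Prod.smul_snd, smul_zero]
    exact sum_fiberCentered_eq_zero c i

theorem linearIndependent_fiberLift [Fintype κ] (hg : LinearIndependent K g) :
    LinearIndependent K (fiberLift (K := K) c g) := by
  rw [Fintype.linearIndependent_iff]
  intro a ha
  have hfst := congrArg Prod.fst ha
  have hsnd := congrArg Prod.snd ha
  simp only [fiberLift, Prod.fst_sum, Prod.snd_sum, Prod.smul_fst, Prod.smul_snd, Prod.fst_zero,
    Prod.snd_zero] at hfst hsnd
  have hfiber : ∀ i, ∑ j with c j = i, a j = 0 := by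
    refine Fintype.linearIndependent_iff.mp hg _ ?_
    rw [← hfst, ← sum_fiberwise univ c]
    refine sum_congr rfl fun i _ => ?_
    rw [sum_smul]
    exact sum_congr rfl fun j hj => by rw [(mem_filter.mp hj).2]
  rw [sum_smul_fiberCentered c a hfiber] at hsnd
  exact congrFun hsnd

end FiberLift

theorem cartan_data_symmetrization_general
    {H : Type*} [AddCommGroup H] [Module ℂ H] [FiniteDimensional ℂ H]
    (B : H →ₗ[ℂ] H →ₗ[ℂ] ℂ)
    (hBsymm : ∀ x y : H, B x y = B y x)
    (hBnondeg : ∀ x : H, (∀ y : H, B x y = 0) → x = 0)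
    {r p : ℕ} (hpr : p ≤ r)
    (h : Fin r → H) (hind : LinearIndependent ℂ h)
    (m : Fin p → ℕ) (hm : ∀ i, 0 < m i)
    {M : ℕ}
    (c : Fin M → Fin p)
    (hcfib : ∀ i : Fin p, (univ.filter (fun j => c j = i)).card = m i) :
    ∃ (q : ℕ) (B' : (Fin q → ℂ) →ₗ[ℂ] (Fin q → ℂ) →ₗ[ℂ] ℂ)
      (ht : Fin M → (Fin q → ℂ)) (s : H →ₗ[ℂ] (Fin q → ℂ)),
      (∀ x y, B' x y = B' y x) ∧
      (∀ x, (∀ y, B' x y = 0) → x = 0) ∧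
      LinearIndependent ℂ ht ∧
      Function.Injective s ∧
      (∀ i : Fin p,
        s (h (Fin.castLE hpr i)) =
          ((m i : ℂ))⁻¹ • ∑ j ∈ univ.filter (fun j => c j = i), ht j) ∧
      (∀ (j : Fin M) (x : H), B' (ht j) (s x) = B (h (Fin.castLE hpr (c j))) x) ∧
      (∀ x y : H, B x y = B' (s x) (s y)) := by
  let g := h ∘ Fin.castLE hpr
  let e := (Module.finBasis ℂ (H × (Fin M → ℂ))).equivFun
  refine ⟨_, BilinForm.congr e (prodDotProductForm B), fun j => e (fiberLift c g j),
    e.toLinearMap ∘ₗ LinearMap.inl ℂ H _, fun x y => ?_, ?_, ?_, ?_, fun i => ?_,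
    fun j x => ?_, fun x y => ?_⟩
  · exact (prodDotProductForm_isSymm ⟨hBsymm⟩).eq _ _
  · exact (prodDotProductForm_separatingLeft hBnondeg).congr e e
  · exact (linearIndependent_fiberLift c g (hind.comp _ (Fin.castLE_injective hpr))).map' _ e.ker
  · exact e.injective.comp LinearMap.inl_injective
  · have hmi : (m i : ℂ) ≠ 0 := Nat.cast_ne_zero.mpr (hm i).ne'
    rw [← map_sum, sum_fiberLift, hcfib, ← map_smul, smul_smul, inv_mul_cancel₀ hmi, one_smul]
    rfl
  · simp [fiberLift, g]
  · simp

theorem cartan_data_symmetrization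
    {H : Type*} [AddCommGroup H] [Module ℂ H] [FiniteDimensional ℂ H]
    (B : H →ₗ[ℂ] H →ₗ[ℂ] ℂ)
    (hBsymm : ∀ x y : H, B x y = B y x)
    (hBnondeg : ∀ x : H, (∀ y : H, B x y = 0) → x = 0)
    {r p : ℕ} (hpr : p ≤ r)
    (h : Fin r → H) (hind : LinearIndependent ℂ h)
    (m : Fin p → ℕ) (hm : ∀ i, 0 < m i)
    {M : ℕ} (hM : M = ∑ i, m i)
    (c : Fin M → Fin p) (hcmono : Monotone c)
    (hcfib : ∀ i : Fin p, (univ.filter (fun j => c j = i)).card = m i) :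
    ∃ (q : ℕ) (B' : (Fin q → ℂ) →ₗ[ℂ] (Fin q → ℂ) →ₗ[ℂ] ℂ)
      (ht : Fin M → (Fin q → ℂ)) (s : H →ₗ[ℂ] (Fin q → ℂ)),
      (∀ x y, B' x y = B' y x) ∧
      (∀ x, (∀ y, B' x y = 0) → x = 0) ∧
      LinearIndependent ℂ ht ∧
      Function.Injective s ∧
      (∀ i : Fin p,
        s (h (Fin.castLE hpr i)) =
          ((m i : ℂ))⁻¹ • ∑ j ∈ univ.filter (fun j => c j = i), ht j) ∧
      (∀ (j : Fin M) (x : H), B' (ht j) (s x) = B (h (Fin.castLE hpr (c j))) x) ∧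
      (∀ x y : H, B x y = B' (s x) (s y)) :=
  cartan_data_symmetrization_general B hBsymm hBnondeg hpr h hind m hm c hcfib
end
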